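/- Encode an abstract G-stair as a pair (ℓ, w) ∈ (ℤ/kℤ) × {right, down}^{k−1}. The number of sequences (Γ₁, …, Γ_k) of abstract G-stairs such that Γ₁ has height k (i.e. its step word consists only of down steps) and, for each 1 ≤ j ≤ k−1, Γ_{j+1} is the G-substair at some position m ∈ {1, …, k} with horizontal left cut of the decreasing linking stair of Γ_j, is exactly k!. (Such sequences are exactly the ordered lists of toric G-constellations of the chambers C ⊂ Θ^gen; this is the combinatorial content of the Theorem that for G ⊂ SL(2,ℂ) cyclic of order k the space of generic stability conditions is the disjoint union of k! chambers.) -/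

import Mathlib

/-- A step of a stair: a right step `+(1,0)` or a down step `+(0,-1)`. -/
inductive Step
  | right
  | down
deriving DecidableEq, BEq

/-- The step word of the decreasing linking stair of a `G`-stair with step word `w`:
`L = w ++ [right] ++ w`. -/
def dls (w : List Step) : List Step := w ++ [Step.right] ++ w

/-- The `G`-substair at position `m` of the decreasing linking stair of the abstract `G`-stair
`Γ = (ℓ, w)`: it has first-box label `ℓ + m` and step word `(L_m, …, L_{m+k-2})` where
`L = dls w`. -/
def substairAt (k : ℕ) (Γ : ZMod k × List Step) (m : ℕ) : ZMod k × List Step :=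
  (Γ.1 + (m : ZMod k), ((dls Γ.2).drop m).take (k - 1))

/-!
For `Γ = (ℓ, w)` with `|w| = k - 1`, the left cut at position `m = i + 1` is horizontal exactly
when `w_i` is a down step (position `k` is excluded because `L_{k-1}` is the inserted right step),
and the substair there is `(ℓ + i + 1, w_{>i} ++ right ++ w_{<i})`: its word has one down step
fewer, and different `i` give different labels. A stair with `d` down steps therefore has exactly
`d` successors, each with `d - 1` down steps, so a height-`k` stair starts `(k - 1)!` chains of
length `k`; the `k` choices of its label give `k!`.
-/

-- `List.count` on `Step` uses the derived `BEq`, which comes without lawfulness.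
instance : LawfulBEq Step where
  eq_of_beq {a b} := by cases a <;> cases b <;> decide
  rfl {a} := by cases a <;> rfl

theorem List.natCard_getElem_eq_eq_count {α : Type*} [BEq α] [LawfulBEq α] (l : List α)
    (a : α) :
    Nat.card {i : Fin l.length // l[i] = a} = l.count a := by
  classical
  rw [Nat.card_eq_fintype_card, Fintype.card_subtype]
  convert Fin.card_filter_univ_eq_vector_get_eq_count a ⟨l, rfl⟩ <;> rfl

theorem List.count_drop_append_cons_take {α : Type*} [BEq α] [LawfulBEq α] {l : List α}
    {i : ℕ} {a b : α} (hi : i < l.length) (hia : l[i] = a) (hb : b ≠ a) :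
    (l.drop (i + 1) ++ b :: l.take i).count a + 1 = l.count a := by
  conv_rhs => rw [← List.take_append_drop i l, List.drop_eq_getElem_cons hi, hia]
  simp [List.count_append, hb]
  omega

section RelPath

variable {α : Type*} (R : α → α → Prop)

def RelPath (n : ℕ) (a : α) : Type _ :=
  {f : Fin (n + 1) → α // f 0 = a ∧ ∀ i : Fin n, R (f i.castSucc) (f i.succ)}

instance (a : α) : Unique (RelPath R 0 a) where
  default := ⟨fun _ => a, rfl, Fin.elim0⟩
  uniq f := Subtype.ext <| funext fun i => by rw [Subsingleton.elim (α := Fin 1) i 0, f.2.1]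

def RelPath.consEquiv (n : ℕ) (a : α) :
    RelPath R (n + 1) a ≃ Σ b : {b // R a b}, RelPath R n b where
  toFun f := ⟨⟨f.1 (Fin.succ 0), by simpa [f.2.1] using f.2.2 0⟩, Fin.tail f.1, rfl,
    fun i => f.2.2 i.succ⟩
  invFun p := ⟨Fin.cons a p.2.1, rfl, Fin.cases (by simpa [p.2.2.1] using p.1.2) p.2.2.2⟩
  left_inv := by
    rintro ⟨f, rfl, -⟩
    exact Subtype.ext (Fin.cons_self_tail f)
  right_inv := fun ⟨⟨_, _⟩, f, hf0, _⟩ => by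
    cases hf0
    rfl

def RelPath.sigmaEquiv {β : Type*} {R : α × β → α × β → Prop} (n : ℕ) (b : β) :
    (Σ a : α, RelPath R n (a, b)) ≃
      {f : Fin (n + 1) → α × β // (f 0).2 = b ∧ ∀ i : Fin n, R (f i.castSucc) (f i.succ)} where
  toFun p := ⟨p.2.1, by rw [p.2.2.1], p.2.2.2⟩
  invFun f := ⟨(f.1 0).1, f.1, Prod.ext rfl f.2.1, f.2.2⟩
  left_inv := fun ⟨a, f, hf0, _⟩ => by
    obtain rfl : (f 0).1 = a := congrArg Prod.fst hf0
    rfl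
  right_inv _ := rfl

variable {R} {P : α → Prop}

theorem forall_apply_of_chain (hR : ∀ a b, P a → R a b → P b)
    {n : ℕ} {f : Fin (n + 1) → α} (h0 : P (f 0))
    (hf : ∀ i : Fin n, R (f i.castSucc) (f i.succ)) (i : Fin (n + 1)) : P (f i) :=
  Fin.induction h0 (fun i hi => hR _ _ hi (hf i)) i

theorem RelPath.finite (hR : ∀ a b, P a → R a b → P b)
    (finite_succ : ∀ a, P a → Finite {b // R a b}) (n : ℕ) {a : α} (ha : P a) :
    Finite (RelPath R n a) := by
  induction n generalizing a with
  | zero => infer_instance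
  | succ n ih =>
    have := finite_succ a ha
    have (b : {b // R a b}) := ih (hR a b ha b.2)
    exact Finite.of_equiv _ (consEquiv R n a).symm

theorem RelPath.natCard_eq_descFactorial (deg : α → ℕ)
    (hR : ∀ a b, P a → R a b → P b ∧ deg b + 1 = deg a)
    (finite_succ : ∀ a, P a → Finite {b // R a b})
    (natCard_succ : ∀ a, P a → Nat.card {b // R a b} = deg a) (n : ℕ) {a : α} (ha : P a) :
    Nat.card (RelPath R n a) = (deg a).descFactorial n := by
  induction n generalizing a with
  | zero => simp
  | succ n ih =>
    have := finite_succ a ha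
    have := Fintype.ofFinite {b // R a b}
    have (b : {b // R a b}) :=
      RelPath.finite (fun a b ha hab => (hR a b ha hab).1) finite_succ n (hR a b ha b.2).1
    have hfiber (b : {b // R a b}) : Nat.card (RelPath R n b) = (deg a - 1).descFactorial n := by
      obtain ⟨hb, hdeg⟩ := hR a b ha b.2
      rw [ih hb, ← hdeg, Nat.add_sub_cancel]
    rw [Nat.card_congr (consEquiv R n a), Nat.card_sigma, Finset.sum_congr rfl fun b _ => hfiber b,
      Finset.sum_const, Finset.card_univ, ← Nat.card_eq_fintype_card, natCard_succ a ha,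
      smul_eq_mul]
    cases deg a with
    | zero => simp
    | succ d => rw [Nat.succ_descFactorial_succ, Nat.add_sub_cancel]

end RelPath

def IsHorizontalSubstair (k : ℕ) (Γ Γ' : ZMod k × List Step) : Prop :=
  ∃ m : ℕ, 1 ≤ m ∧ m ≤ k ∧ (dls Γ.2)[m - 1]? = some Step.down ∧ Γ' = substairAt k Γ m

theorem dls_getElem?_of_lt {w : List Step} {i : ℕ} (hi : i < w.length) :
    (dls w)[i]? = w[i]? := by
  rw [dls, List.append_assoc, List.getElem?_append_left hi]

theorem dls_getElem?_length (w : List Step) : (dls w)[w.length]? = some Step.right := by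
  simp [dls]

section IsHorizontalSubstair

variable {k : ℕ} {Γ Γ' : ZMod k × List Step}

theorem snd_substairAt_succ (hk : Γ.2.length + 1 = k) {i : ℕ} (hi : i < Γ.2.length) :
    (substairAt k Γ (i + 1)).2 = Γ.2.drop (i + 1) ++ Step.right :: Γ.2.take i := by
  rw [substairAt, show k - 1 = Γ.2.length by omega]
  simp only [dls, List.append_assoc, List.singleton_append, List.drop_append, List.take_append,
    List.length_drop]
  rw [show i + 1 - Γ.2.length = 0 by omega,
    show Γ.2.length - (Γ.2.length - (i + 1)) = i + 1 by omega, List.take_of_length_le (by simp)]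
  rfl

theorem isHorizontalSubstair_iff (hk : Γ.2.length + 1 = k) :
    IsHorizontalSubstair k Γ Γ' ↔
      ∃ i : Fin Γ.2.length, Γ.2[i] = Step.down ∧ substairAt k Γ (i + 1) = Γ' := by
  constructor
  · rintro ⟨m, hm1, hmk, hdown, rfl⟩
    have hm : m - 1 < Γ.2.length := by
      by_contra h
      rw [show m - 1 = Γ.2.length by omega, dls_getElem?_length] at hdown
      cases hdown
    rw [dls_getElem?_of_lt hm, List.getElem?_eq_some_iff] at hdown
    exact ⟨⟨m - 1, hm⟩, hdown.2, by rw [Fin.val_mk, Nat.sub_add_cancel hm1]⟩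
  · rintro ⟨i, hi, rfl⟩
    exact ⟨i + 1, by omega, by omega, by simpa [dls_getElem?_of_lt i.2] using hi, rfl⟩

theorem substairAt_succ_injective (hk : Γ.2.length + 1 = k) :
    Function.Injective fun i : Fin Γ.2.length => substairAt k Γ (i + 1) := by
  intro i j hij
  have h : ((i + 1 : ℕ) : ZMod k) = ((j + 1 : ℕ) : ZMod k) :=
    add_left_cancel (congrArg Prod.fst hij)
  rw [ZMod.natCast_eq_natCast_iff', Nat.mod_eq_of_lt (by omega), Nat.mod_eq_of_lt (by omega)] at h
  exact Fin.ext (by omega)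

noncomputable def horizontalSubstairEquivDownSteps (hk : Γ.2.length + 1 = k) :
    {Γ' // IsHorizontalSubstair k Γ Γ'} ≃ {i : Fin Γ.2.length // Γ.2[i] = Step.down} :=
  ((Equiv.ofInjective _ ((substairAt_succ_injective hk).comp Subtype.val_injective)).trans
    (Equiv.setCongr (t := {Γ' | IsHorizontalSubstair k Γ Γ'}) (Set.ext fun Γ' => by
      simp [isHorizontalSubstair_iff hk]))).symm

theorem IsHorizontalSubstair.length_and_count (hk : Γ.2.length + 1 = k)
    (h : IsHorizontalSubstair k Γ Γ') :
    Γ'.2.length + 1 = k ∧ Γ'.2.count Step.down + 1 = Γ.2.count Step.down := by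
  obtain ⟨i, hi, rfl⟩ := (isHorizontalSubstair_iff hk).1 h
  rw [snd_substairAt_succ hk i.2]
  exact ⟨by simp; omega, List.count_drop_append_cons_take i.2 hi (by decide)⟩

theorem RelPath.finite_isHorizontalSubstair (n : ℕ) (hk : Γ.2.length + 1 = k) :
    Finite (RelPath (IsHorizontalSubstair k) n Γ) :=
  RelPath.finite (P := fun Γ => Γ.2.length + 1 = k)
    (fun _ _ hΓ h => (h.length_and_count hΓ).1)
    (fun _ hΓ => Finite.of_equiv _ (horizontalSubstairEquivDownSteps hΓ).symm) n hk

theorem RelPath.natCard_isHorizontalSubstair (n : ℕ) (hk : Γ.2.length + 1 = k) :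
    Nat.card (RelPath (IsHorizontalSubstair k) n Γ) = (Γ.2.count Step.down).descFactorial n :=
  RelPath.natCard_eq_descFactorial (P := fun Γ => Γ.2.length + 1 = k) _
    (fun _ _ hΓ h => h.length_and_count hΓ)
    (fun _ hΓ => Finite.of_equiv _ (horizontalSubstairEquivDownSteps hΓ).symm)
    (fun _ hΓ => (Nat.card_congr (horizontalSubstairEquivDownSteps hΓ)).trans
      (List.natCard_getElem_eq_eq_count _ _))
    n hk

end IsHorizontalSubstair

/-- The number of sequences `(Γ₁, …, Γ_k)` of abstract `G`-stairs
(encoded as pairs `(ℓ, w) ∈ ℤ/kℤ × {right,down}^{k-1}`) such that `Γ₁` has height `k`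
(its step word consists only of down steps) and each `Γ_{j+1}` is the `G`-substair at some
position `m ∈ {1, …, k}` with horizontal left cut of the decreasing linking stair of `Γ_j`,
is exactly `k!`.  (These sequences are the ordered lists of toric `G`-constellations of the
chambers `C ⊂ Θ^gen`; hence there are `k!` chambers.) -/
theorem stmt6 (k : ℕ) (hk : 1 ≤ k) :
    Nat.card {Γ : Fin k → ZMod k × List Step //
      (∀ j, (Γ j).2.length = k - 1) ∧
      (Γ ⟨0, hk⟩).2 = List.replicate (k - 1) Step.down ∧
      (∀ j : ℕ, ∀ hj : j + 1 < k,
        ∃ m : ℕ, 1 ≤ m ∧ m ≤ k ∧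
          (dls (Γ ⟨j, Nat.lt_of_succ_lt hj⟩).2)[m - 1]? = some Step.down ∧
          Γ ⟨j + 1, hj⟩ = substairAt k (Γ ⟨j, Nat.lt_of_succ_lt hj⟩) m)} =
    Nat.factorial k := by
  obtain ⟨n, rfl⟩ : ∃ n, k = n + 1 := ⟨k - 1, by omega⟩
  have hstart (ℓ : ZMod (n + 1)) : (ℓ, List.replicate n Step.down).2.length + 1 = n + 1 := by
    simp
  have := fun ℓ => RelPath.finite_isHorizontalSubstair n (hstart ℓ)
  calc _ = Nat.card (Σ ℓ : ZMod (n + 1),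
        RelPath (IsHorizontalSubstair (n + 1)) n (ℓ, List.replicate n Step.down)) := by
        refine Nat.card_congr ((Equiv.subtypeEquivRight fun Γ => ?_).trans
          (RelPath.sigmaEquiv n _).symm)
        refine ⟨fun ⟨_, h0, h⟩ => ⟨h0, fun i => h i (by omega)⟩,
          fun ⟨h0, h⟩ => ⟨fun j => ?_, h0, fun j hj => h ⟨j, by omega⟩⟩⟩
        have := forall_apply_of_chain (P := fun Γ => Γ.2.length + 1 = n + 1)
          (fun _ _ hΓ h => (h.length_and_count hΓ).1) (by simp [h0]) h j
        omega
    _ = (n + 1).factorial := by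
      rw [Nat.card_sigma]
      simp [RelPath.natCard_isHorizontalSubstair n (hstart _), Nat.descFactorial_self,
        Nat.factorial_succ]
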